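/- arXiv:math/0409054 — 2 statements merged into one kernel-verified Lean document; each statement's English description precedes it below -/
import Mathlib

section
/- In the degree-1 integral homology of the 3x3 chessboard complex M_{3,3}, the relation 3·(α_{1,1',2'} ∧ β_{2,3,3'}) = -u_{2,3,1',2',3'} - v_{1,2,3,1',2'} - 2(v_{1,2,3,2',3'} + u_{1,2,1',2',3'}) holds among homology classes. -/
/-!
STATEMENT 3: In ˜H_1(M_{3,3};ℤ), the relation
3·(α_{1,1',2'} ∧ β_{2,3,3'}) = -u_{2,3,1',2',3'} - v_{1,2,3,1',2'} - 2(v_{1,2,3,2',3'} + u_{1,2,1',2',3'})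
holds among homology classes; equivalently the 1-cycle
3·(α_{1,1',2'} ∧ β_{2,3,3'}) + u_{2,3,1',2',3'} + v_{1,2,3,1',2'} + 2(v_{1,2,3,2',3'} + u_{1,2,1',2',3'})
is the boundary of a 2-chain of the chessboard complex M_{3,3}.

Chains are modelled on the oriented simplicial chain complex with canonical
basis the strictly sorted lists of vertices (pairs (row, column) ordered
lexicographically); ∧ re-sorts concatenations with the sign of the permutation.
-/

abbrev V : Type := ℕ × ℕ

abbrev Ch : Type := List V →₀ ℤ

def vlt (p q : V) : Prop := p.1 < q.1 ∨ (p.1 = q.1 ∧ p.2 < q.2)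

instance : DecidableRel vlt := fun p q => by unfold vlt; infer_instance

def vle (p q : V) : Prop := p = q ∨ vlt p q

instance : DecidableRel vle := fun p q => by unfold vle; infer_instance

def inversions (l l' : List V) : ℕ :=
  (l.map fun x => l'.countP fun y => decide (vlt y x)).sum

noncomputable def wedge (c d : Ch) : Ch :=
  c.sum fun l m => d.sum fun l' m' =>
    Finsupp.single (List.insertionSort vle (l ++ l')) ((-1 : ℤ) ^ (inversions l l') * m * m')

infixl:70 " ⋏ " => wedge

noncomputable def bd (c : Ch) : Ch :=
  c.sum fun l m => (Finset.range l.length).sum fun i =>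
    Finsupp.single (l.eraseIdx i) (m * (-1 : ℤ) ^ i)

noncomputable def pt (i j : ℕ) : Ch := Finsupp.single [((i, j) : V)] 1

noncomputable def u (i₁ i₂ j₁ j₂ j₃ : ℕ) : Ch :=
  pt i₁ j₁ ⋏ pt i₂ j₂ + pt i₂ j₂ ⋏ pt i₁ j₃ + pt i₁ j₃ ⋏ pt i₂ j₁ +
    pt i₂ j₁ ⋏ pt i₁ j₂ + pt i₁ j₂ ⋏ pt i₂ j₃ + pt i₂ j₃ ⋏ pt i₁ j₁

noncomputable def v (i₁ i₂ i₃ j₁ j₂ : ℕ) : Ch :=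
  pt i₁ j₁ ⋏ pt i₂ j₂ + pt i₂ j₂ ⋏ pt i₃ j₁ + pt i₃ j₁ ⋏ pt i₁ j₂ +
    pt i₁ j₂ ⋏ pt i₂ j₁ + pt i₂ j₁ ⋏ pt i₃ j₂ + pt i₃ j₂ ⋏ pt i₁ j₁

noncomputable def α (i j k : ℕ) : Ch := pt i j - pt i k

noncomputable def β (i j k : ℕ) : Ch := pt i k - pt j k

/-- `l` is a canonical oriented 2-simplex of M_{3,3}: a strictly sorted list of
three cells of the 3×3 board with pairwise distinct rows and columns. -/
def IsTriangleM33 (l : List V) : Prop :=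
  l.Pairwise vlt ∧ l.length = 3 ∧
    (∀ p ∈ l, p.1 ∈ ({1, 2, 3} : Finset ℕ) ∧ p.2 ∈ ({1, 2, 3} : Finset ℕ)) ∧
    l.Pairwise fun p q => p.1 ≠ q.1 ∧ p.2 ≠ q.2

/-!
The right-hand side, moved to the left, is the boundary of the explicit 2-chain
`3·[11',22',33'] + [11',23',32'] - [12',21',33'] + [12',23',31'] + 2·[13',21',32']`;
expanding each wedge of two vertices into their sorted edge, signed by the transposition,
reduces this to a linear identity between edges.
-/

instance : DecidablePred IsTriangleM33 := fun l => by unfold IsTriangleM33; infer_instance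

lemma vlt_asymm {p q : V} (h : vlt p q) : ¬ vlt q p := by
  unfold vlt at *; omega

lemma not_vle_of_vlt {p q : V} (h : vlt q p) : ¬ vle p q := by
  rintro (rfl | h')
  · unfold vlt at h; omega
  · exact vlt_asymm h h'

lemma wedge_single_single (l l' : List V) (m m' : ℤ) :
    Finsupp.single l m ⋏ Finsupp.single l' m' =
      Finsupp.single (List.insertionSort vle (l ++ l')) ((-1 : ℤ) ^ inversions l l' * m * m') := by
  unfold wedge
  rw [Finsupp.sum_single_index, Finsupp.sum_single_index] <;>
    simp only [mul_zero, zero_mul, Finsupp.single_zero, Finsupp.sum, Finset.sum_const_zero]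

lemma wedge_sub_left (c c' d : Ch) : (c - c') ⋏ d = c ⋏ d - c' ⋏ d :=
  Finsupp.sum_sub_index fun _ _ _ => by
    simp only [Finsupp.sum, ← Finset.sum_sub_distrib, ← Finsupp.single_sub, sub_mul, mul_sub]

lemma wedge_sub_right (c d d' : Ch) : c ⋏ (d - d') = c ⋏ d - c ⋏ d' := by
  unfold wedge
  rw [← Finsupp.sum_sub]
  refine Finsupp.sum_congr fun _ _ => Finsupp.sum_sub_index fun _ _ _ => ?_
  rw [← Finsupp.single_sub, mul_sub]

lemma single_wedge_single_of_vlt {p q : V} (h : vlt p q) :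
    Finsupp.single [p] 1 ⋏ Finsupp.single [q] 1 = Finsupp.single [p, q] 1 := by
  simp [wedge_single_single, inversions, vle, h, vlt_asymm h]

lemma single_wedge_single_of_vlt' {p q : V} (h : vlt q p) :
    Finsupp.single [p] 1 ⋏ Finsupp.single [q] 1 = -Finsupp.single [q, p] 1 := by
  simp [wedge_single_single, inversions, not_vle_of_vlt h, h, Finsupp.single_neg]

lemma bd_add (c c' : Ch) : bd (c + c') = bd c + bd c' :=
  Finsupp.sum_add_index' (fun _ => by simp) fun _ _ _ => by
    simp only [add_mul, Finsupp.single_add, Finset.sum_add_distrib]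

noncomputable def bdHom : Ch →+ Ch := AddMonoidHom.mk' bd bd_add

lemma bd_single_triple (a b c : V) (m : ℤ) :
    bd (Finsupp.single [a, b, c] m) =
      Finsupp.single [b, c] m - Finsupp.single [a, c] m + Finsupp.single [a, b] m := by
  unfold bd
  rw [Finsupp.sum_single_index (by simp)]
  simp only [List.length_cons, List.length_nil, Finset.sum_range_succ, Finset.sum_range_zero,
    List.eraseIdx_cons_zero, List.eraseIdx_cons_succ, zero_add, Nat.reduceAdd, pow_zero, pow_one,
    mul_one, mul_neg, even_two, Even.neg_pow, one_pow, Finsupp.single_neg]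
  abel

theorem torsion_relation_in_H1_M33 :
    ∃ c : Ch, (∀ l ∈ c.support, IsTriangleM33 l) ∧
      bd c = 3 • (α 1 1 2 ⋏ β 2 3 3) + u 2 3 1 2 3 + v 1 2 3 1 2 +
        2 • (v 1 2 3 2 3 + u 1 2 1 2 3) := by
  let c : Ch := 3 • Finsupp.single [(1, 1), (2, 2), (3, 3)] 1 +
    Finsupp.single [(1, 1), (2, 3), (3, 2)] 1 - Finsupp.single [(1, 2), (2, 1), (3, 3)] 1 +
    Finsupp.single [(1, 2), (2, 3), (3, 1)] 1 + 2 • Finsupp.single [(1, 3), (2, 1), (3, 2)] 1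
  have hc : c ∈ Finsupp.supported ℤ ℤ {l | IsTriangleM33 l} := by
    apply_rules [add_mem, sub_mem, nsmul_mem, Finsupp.single_mem_supported] <;> decide
  refine ⟨c, fun l hl => (Finsupp.mem_supported ℤ c).1 hc hl, ?_⟩
  change bdHom c = _
  simp only [c, map_add, map_sub, map_nsmul]
  simp only [bdHom, AddMonoidHom.mk'_apply, bd_single_triple, u, v, α, β, pt,
    wedge_sub_left, wedge_sub_right]
  simp (disch := decide) only [single_wedge_single_of_vlt, single_wedge_single_of_vlt']
  abel
end

section
/- For n ≡ 0 mod 3, the number of matchings G on vertex set [n] whose associated partition λ(G) (from the recursive block decomposition) equals (3,3,…,3) is c_n = 2^{n/3} · ∏_{j=1}^{n/3} (n - 3j + 1). -/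
/-!
STATEMENT 8: For n ≡ 0 mod 3, the number of matchings G on vertex set [n] whose
block-decomposition partition λ(G) is (3,3,…,3) equals
c_n = 2^{n/3} · ∏_{j=1}^{n/3} (n - 3j + 1).

A matching is encoded as a set E of 2-element subsets of Fin n that are pairwise
disjoint.  The block decomposition is computed recursively: if one uncovered
vertex t remains, the final block is {t}; otherwise the two smallest uncovered
vertices a < b together with their neighbours form the next block.  λ(G) is the
multiset of block sizes.
-/

/-- neighbours of `a` in the graph with edge set `E` -/
def nbrs {n : ℕ} (E : Finset (Finset (Fin n))) (a : Fin n) : Finset (Fin n) :=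
  Finset.univ.filter fun b => b ≠ a ∧ ∃ e ∈ E, a ∈ e ∧ b ∈ e

/-- the block decomposition of the graph with edge set `E`, starting from the
set `s` of uncovered vertices (with enough `fuel`, e.g. `fuel = n`): the list of
pairs (block vertex set, block edge set) -/
def blocks {n : ℕ} (E : Finset (Finset (Fin n))) :
    ℕ → Finset (Fin n) → List (Finset (Fin n) × Finset (Finset (Fin n)))
  | 0, _ => []
  | fuel + 1, s =>
    if h : s.Nonempty then
      if h1 : (s.erase (s.min' h)).Nonempty then
        let a := s.min' h
        let b := (s.erase a).min' h1
        let B := insert a (insert b (nbrs E a ∪ nbrs E b))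
        (B, E.filter fun e => e ⊆ B) :: blocks E fuel (s \ B)
      else [({s.min' h}, ∅)]
    else []

/-! The two smallest uncovered vertices `a < b` form a block of size three exactly when one of
them is matched to a third uncovered vertex `c` and the other one is unmatched. Deleting the edge
`{x, c}` (`x ∈ {a, b}`) leaves a matching of the remaining vertices whose later blocks are the same,
since neighbourhoods of vertices outside `{a, b, c}` do not change. Hence a matching counted on
`3k + 3` vertices is one of the `2 (3k + 1)` edges `{x, c}` together with a matching counted on the
`3k` vertices left, and the count is `∏_{j < k} 2 (3j + 1)`. -/

open Finset

variable {n : ℕ} {E E' : Finset (Finset (Fin n))} {s t : Finset (Fin n)} {a b c v x : Fin n}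

structure IsMatchingOn (s : Finset (Fin n)) (E : Finset (Finset (Fin n))) : Prop where
  card_eq_two : ∀ e ∈ E, e.card = 2
  pairwise_disjoint : ∀ e ∈ E, ∀ f ∈ E, e ≠ f → Disjoint e f
  subset : ∀ e ∈ E, e ⊆ s

def block (E : Finset (Finset (Fin n))) (a b : Fin n) : Finset (Fin n) :=
  insert a (insert b (nbrs E a ∪ nbrs E b))

def blockSizes (E : Finset (Finset (Fin n))) (fuel : ℕ) (s : Finset (Fin n)) : List ℕ :=
  (blocks E fuel s).map fun b => b.1.card

lemma blockSizes_empty (E : Finset (Finset (Fin n))) (fuel : ℕ) : blockSizes E fuel ∅ = [] := by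
  cases fuel <;> simp [blockSizes, blocks]

lemma exists_blockSizes_succ (hs : 2 ≤ s.card) :
    ∃ a ∈ s, ∃ b ∈ s, a ≠ b ∧ ∀ (E : Finset (Finset (Fin n))) (fuel : ℕ),
      blockSizes E (fuel + 1) s = (block E a b).card :: blockSizes E fuel (s \ block E a b) := by
  have hne : s.Nonempty := card_pos.mp (by omega)
  have h1 : (s.erase (s.min' hne)).Nonempty :=
    card_pos.mp (by rw [card_erase_of_mem (min'_mem s hne)]; omega)
  have hb := min'_mem _ h1
  refine ⟨_, min'_mem s hne, _, mem_of_mem_erase hb, (ne_of_mem_erase hb).symm, fun E fuel => ?_⟩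
  simp only [blockSizes, blocks, dif_pos hne, dif_pos h1, List.map_cons]
  rfl

lemma blockSizes_congr (h : ∀ v ∈ s, nbrs E v = nbrs E' v) (fuel : ℕ) :
    blockSizes E fuel s = blockSizes E' fuel s := by
  induction fuel generalizing s with
  | zero => rfl
  | succ fuel ih =>
    simp only [blockSizes, blocks]
    split_ifs with hne h1
    · rw [h _ (min'_mem s hne), h _ (mem_of_mem_erase (min'_mem _ h1))]
      simp only [List.map_cons, List.cons.injEq, true_and]
      exact ih fun v hv => h v (mem_sdiff.1 hv).1
    · rfl
    · rfl

lemma nbrs_insert (e : Finset (Fin n)) (E : Finset (Finset (Fin n))) (v : Fin n) :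
    nbrs (insert e E) v = nbrs {e} v ∪ nbrs E v := by
  ext z
  simp only [nbrs, mem_filter, mem_univ, true_and, mem_union, mem_insert, mem_singleton]
  grind

lemma nbrs_singleton (e : Finset (Fin n)) (v : Fin n) :
    nbrs {e} v = if v ∈ e then e.erase v else ∅ := by
  ext z
  split_ifs <;> simp [nbrs, *, and_comm]

lemma nbrs_eq_empty (h : ∀ e ∈ E, v ∉ e) : nbrs E v = ∅ := by
  ext z
  simp only [nbrs, mem_filter, mem_univ, true_and, notMem_empty, iff_false]
  exact fun ⟨_, e, he, hv, _⟩ => h e he hv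

lemma nbrs_insert_of_notMem {e : Finset (Fin n)} (hv : v ∉ e) : nbrs (insert e E) v = nbrs E v := by
  rw [nbrs_insert, nbrs_singleton, if_neg hv, empty_union]

lemma blockSizes_insert_of_disjoint {e : Finset (Fin n)} (h : Disjoint e s) (fuel : ℕ) :
    blockSizes (insert e E) fuel s = blockSizes E fuel s :=
  blockSizes_congr (fun _ hv => nbrs_insert_of_notMem (disjoint_right.1 h hv)) fuel

lemma eq_pair_of_card_eq_two {e : Finset (Fin n)} (he : e.card = 2) (hx : x ∈ e) (hc : c ∈ e)
    (hxc : x ≠ c) : e = {x, c} :=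
  (eq_of_subset_of_card_le (insert_subset hx (singleton_subset_iff.2 hc))
    (by rw [he, card_pair hxc])).symm

lemma pair_subset_triple (hx : x ∈ ({a, b} : Finset (Fin n))) :
    ({x, c} : Finset (Fin n)) ⊆ {a, b, c} := by
  simp only [mem_insert, mem_singleton] at hx
  rcases hx with rfl | rfl <;> simp [insert_subset_iff]

lemma card_triple (hab : a ≠ b) (hc : c ∉ ({a, b} : Finset (Fin n))) :
    ({a, b, c} : Finset (Fin n)).card = 3 := by
  simp only [mem_insert, mem_singleton, not_or] at hc
  rw [card_insert_of_notMem (by simp [hab, Ne.symm hc.1]), card_pair (Ne.symm hc.2)]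

lemma card_sdiff_triple (hab : a ≠ b) (ha : a ∈ s) (hb : b ∈ s) (hc : c ∈ s \ {a, b}) :
    (s \ {a, b, c}).card + 3 = s.card := by
  have hsub : ({a, b, c} : Finset (Fin n)) ⊆ s := by
    simp [insert_subset_iff, ha, hb, (mem_sdiff.1 hc).1]
  rw [← card_sdiff_add_card_eq_card hsub, card_triple hab (mem_sdiff.1 hc).2]

namespace IsMatchingOn

lemma mono (hE : IsMatchingOn s E) (hE' : E' ⊆ E) (ht : ∀ e ∈ E', e ⊆ t) : IsMatchingOn t E' :=
  ⟨fun e he => hE.card_eq_two e (hE' he),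
    fun e he f hf => hE.pairwise_disjoint e (hE' he) f (hE' hf), ht⟩

lemma insert (hE : IsMatchingOn t E) {e : Finset (Fin n)} (he : e.card = 2) (hes : e ⊆ s)
    (hts : t ⊆ s) (het : Disjoint e t) : IsMatchingOn s (insert e E) where
  card_eq_two := by
    simp only [mem_insert, forall_eq_or_imp]
    exact ⟨he, hE.card_eq_two⟩
  pairwise_disjoint := by
    have hdisj : ∀ f ∈ E, Disjoint e f := fun f hf => het.mono_right (hE.subset f hf)
    simp only [mem_insert, forall_eq_or_imp]
    refine ⟨⟨fun h => absurd rfl h, fun f hf _ => hdisj f hf⟩,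
      fun f hf => ⟨fun hne => (hdisj f hf).symm, hE.pairwise_disjoint f hf⟩⟩
  subset := by
    simp only [mem_insert, forall_eq_or_imp]
    exact ⟨hes, fun f hf => (hE.subset f hf).trans hts⟩

end IsMatchingOn

lemma subset_block_of_mem (hv : v = a ∨ v = b) {e : Finset (Fin n)} (he : e ∈ E) (hve : v ∈ e) :
    e ⊆ block E a b := by
  intro z hz
  by_cases hzv : z = v
  · rcases hv with rfl | rfl <;> simp [block, hzv]
  · have hz : z ∈ nbrs E v := by
      simp only [nbrs, mem_filter, mem_univ, true_and]
      exact ⟨hzv, e, he, hve, hz⟩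
    rcases hv with rfl | rfl <;> simp [block, hz]

lemma exists_edge_of_card_block_eq_three (hE : IsMatchingOn s E) (hab : a ≠ b)
    (h : (block E a b).card = 3) :
    ∃ x ∈ ({a, b} : Finset (Fin n)), ∃ c ∉ ({a, b} : Finset (Fin n)),
      block E a b = {a, b, c} ∧ {x, c} ∈ E ∧ ∀ e ∈ E.erase {x, c}, Disjoint e {a, b, c} := by
  have hab_sub : {a, b} ⊆ block E a b := by simp [block, insert_subset_iff]
  obtain ⟨c, hc⟩ : ∃ c, block E a b \ {a, b} = {c} := card_eq_one.1 (by
    rw [card_sdiff_of_subset hab_sub, h, card_pair hab])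
  have hcB : c ∈ block E a b \ {a, b} := hc ▸ mem_singleton_self c
  obtain ⟨hcB, hcab⟩ := mem_sdiff.1 hcB
  have hB : block E a b = {a, b, c} := by
    rw [← union_sdiff_of_subset hab_sub, hc]
    ext; simp
  obtain ⟨x, hx, hcx, e, heE, hxe, hce⟩ : ∃ x ∈ ({a, b} : Finset (Fin n)), c ≠ x ∧
      ∃ e ∈ E, x ∈ e ∧ c ∈ e := by
    simp only [mem_insert, mem_singleton, not_or] at hcab
    simp only [block, mem_insert, mem_union, hcab, false_or] at hcB
    rcases hcB with h | h <;> simp only [nbrs, mem_filter, mem_univ, true_and] at h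
    exacts [⟨a, by simp, h⟩, ⟨b, by simp, h⟩]
  have he := eq_pair_of_card_eq_two (hE.card_eq_two e heE) hxe hce hcx.symm
  subst he
  refine ⟨x, hx, c, hcab, hB, heE, fun f hf => disjoint_left.2 fun v hvf hv => ?_⟩
  obtain ⟨hfne, hfE⟩ := mem_erase.1 hf
  have hdisj := hE.pairwise_disjoint f hfE _ heE hfne
  obtain hv | rfl : (v = a ∨ v = b) ∨ v = c := by simpa [or_assoc] using hv
  · have : (f ∪ {x, c}).card ≤ ({a, b, c} : Finset (Fin n)).card :=
      card_le_card (union_subset (hB ▸ subset_block_of_mem hv hfE hvf)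
        (hB ▸ subset_block_of_mem (by simpa using hx) heE (mem_insert_self x {c})))
    -- `f` and `{x, c}` would be disjoint edges inside the three-element block
    rw [card_union_of_disjoint hdisj, hE.card_eq_two f hfE, hE.card_eq_two _ heE] at this
    have := this.trans card_le_three
    omega
  · exact disjoint_left.1 hdisj hvf (by simp)

lemma block_insert_pair (hx : x ∈ ({a, b} : Finset (Fin n))) (hc : c ∉ ({a, b} : Finset (Fin n)))
    (ha : ∀ e ∈ E, a ∉ e) (hb : ∀ e ∈ E, b ∉ e) : block (insert {x, c} E) a b = {a, b, c} := by
  simp only [mem_insert, mem_singleton, not_or] at hx hc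
  ext z
  rcases hx with rfl | rfl <;>
    simp only [block, nbrs_insert, nbrs_singleton, nbrs_eq_empty ha, nbrs_eq_empty hb] <;>
    split_ifs <;> simp <;> grind

open scoped Classical in
noncomputable def tripleBlockMatchings (fuel : ℕ) (s : Finset (Fin n)) :
    Finset (Finset (Finset (Fin n))) :=
  {E | IsMatchingOn s E ∧ blockSizes E fuel s = List.replicate (s.card / 3) 3}

lemma mem_tripleBlockMatchings {fuel : ℕ} :
    E ∈ tripleBlockMatchings fuel s ↔
      IsMatchingOn s E ∧ blockSizes E fuel s = List.replicate (s.card / 3) 3 := by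
  simp [tripleBlockMatchings]

lemma tripleBlockMatchings_empty (fuel : ℕ) :
    tripleBlockMatchings fuel (∅ : Finset (Fin n)) = {∅} := by
  ext E
  simp only [mem_tripleBlockMatchings, blockSizes_empty, card_empty, mem_singleton]
  refine ⟨fun ⟨hE, _⟩ => eq_empty_of_forall_notMem fun e he => ?_, ?_⟩
  · have := hE.card_eq_two e he
    rw [subset_empty.1 (hE.subset e he)] at this
    simp at this
  · rintro rfl
    exact ⟨⟨by simp, by simp, by simp⟩, rfl⟩

lemma mem_tripleBlockMatchings_succ {fuel : ℕ} (hab : a ≠ b) (ha : a ∈ s) (hb : b ∈ s)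
    (hsizes : ∀ E : Finset (Finset (Fin n)),
      blockSizes E (fuel + 1) s = (block E a b).card :: blockSizes E fuel (s \ block E a b)) :
    E ∈ tripleBlockMatchings (fuel + 1) s ↔ ∃ x ∈ ({a, b} : Finset (Fin n)), ∃ c ∈ s \ {a, b},
      ∃ E' ∈ tripleBlockMatchings fuel (s \ {a, b, c}), insert {x, c} E' = E := by
  simp only [mem_tripleBlockMatchings, hsizes]
  constructor
  · rintro ⟨hE, hsz⟩
    obtain ⟨m, hm⟩ : ∃ m, s.card / 3 = m + 1 :=
      ⟨s.card / 3 - 1, by rcases h : s.card / 3 <;> simp_all⟩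
    rw [hm, List.replicate_succ, List.cons.injEq] at hsz
    obtain ⟨x, hx, c, hc, hB, hxc, hdisj⟩ := exists_edge_of_card_block_eq_three hE hab hsz.1
    have hcs : c ∈ s \ {a, b} := mem_sdiff.2 ⟨hE.subset _ hxc (by simp), hc⟩
    refine ⟨x, hx, c, hcs, E.erase {x, c}, ⟨hE.mono (erase_subset _ _) fun e he =>
      subset_sdiff.2 ⟨hE.subset e (mem_of_mem_erase he), hdisj e he⟩, ?_⟩, insert_erase hxc⟩
    have hsplit := card_sdiff_triple hab ha hb hcs
    rw [hB] at hsz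
    rw [← blockSizes_insert_of_disjoint (disjoint_sdiff.mono_left (pair_subset_triple hx)),
      insert_erase hxc, hsz.2]
    congr 1
    omega
  · rintro ⟨x, hx, c, hcs, E', ⟨hE', hsz⟩, rfl⟩
    have hc := (mem_sdiff.1 hcs).2
    have hsplit := card_sdiff_triple hab ha hb hcs
    have hxc : x ≠ c := by rintro rfl; exact hc hx
    have hdisj : Disjoint {x, c} (s \ {a, b, c}) := disjoint_sdiff.mono_left (pair_subset_triple hx)
    have hB := block_insert_pair (E := E') hx hc
      (fun e he h => (mem_sdiff.1 (hE'.subset e he h)).2 (by simp))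
      (fun e he h => (mem_sdiff.1 (hE'.subset e he h)).2 (by simp))
    refine ⟨hE'.insert (card_pair hxc) ((pair_subset_triple hx).trans ?_) sdiff_subset hdisj, ?_⟩
    · simp [insert_subset_iff, ha, hb, (mem_sdiff.1 hcs).1]
    rw [hB, blockSizes_insert_of_disjoint hdisj, hsz, card_triple hab hc,
      show s.card / 3 = (s \ {a, b, c}).card / 3 + 1 by omega, List.replicate_succ]

lemma insert_pair_inj {x' c' : Fin n} {E₁ E₂ : Finset (Finset (Fin n))}
    (hx : x ∈ ({a, b} : Finset (Fin n))) (hx' : x' ∈ ({a, b} : Finset (Fin n)))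
    (hc : c ∉ ({a, b} : Finset (Fin n))) (hc' : c' ∉ ({a, b} : Finset (Fin n)))
    (hE₁ : ∀ e ∈ E₁, Disjoint e {a, b, c}) (hE₂ : ∀ e ∈ E₂, Disjoint e {a, b, c'})
    (h : insert {x, c} E₁ = insert {x', c'} E₂) : x = x' ∧ c = c' ∧ E₁ = E₂ := by
  have hnotMem {x c d : Fin n} {E : Finset (Finset (Fin n))} (hx : x ∈ ({a, b} : Finset (Fin n)))
      (hE : ∀ e ∈ E, Disjoint e {a, b, d}) : {x, c} ∉ E := fun he =>
    disjoint_left.1 (hE _ he) (mem_insert_self x {c})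
      (pair_subset_triple hx (mem_insert_self x {d}))
  have hpair : ({x, c} : Finset (Fin n)) = {x', c'} := by
    have hmem : {x, c} ∈ insert {x', c'} E₂ := h ▸ mem_insert_self _ _
    exact (mem_insert.1 hmem).resolve_right (hnotMem hx hE₂)
  have hxx : x = x' := by
    have : x ∈ ({x', c'} : Finset (Fin n)) := hpair ▸ mem_insert_self x {c}
    simp only [mem_insert, mem_singleton] at this
    exact this.resolve_right fun h => hc' (h ▸ hx)
  have hcc : c = c' := by
    have : c ∈ ({x', c'} : Finset (Fin n)) := hpair ▸ by simp
    simp only [mem_insert, mem_singleton] at this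
    exact this.resolve_left fun h => hc (h ▸ hx')
  subst hxx hcc
  exact ⟨rfl, rfl, by rw [← erase_insert (hnotMem hx hE₁), h, erase_insert (hnotMem hx hE₂)]⟩

lemma card_tripleBlockMatchings_succ {fuel : ℕ} (hab : a ≠ b) (ha : a ∈ s) (hb : b ∈ s)
    (hsizes : ∀ E : Finset (Finset (Fin n)),
      blockSizes E (fuel + 1) s = (block E a b).card :: blockSizes E fuel (s \ block E a b)) :
    (tripleBlockMatchings (fuel + 1) s).card =
      ∑ p ∈ ({a, b} : Finset (Fin n)) ×ˢ (s \ {a, b}),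
        (tripleBlockMatchings fuel (s \ {a, b, p.2})).card := by
  have hdisj {c : Fin n} {E : Finset (Finset (Fin n))}
      (hE : E ∈ tripleBlockMatchings fuel (s \ {a, b, c})) :
      ∀ e ∈ E, Disjoint e {a, b, c} := fun e he =>
    (subset_sdiff.1 ((mem_tripleBlockMatchings.1 hE).1.subset e he)).2
  have himage : tripleBlockMatchings (fuel + 1) s =
      ((({a, b} : Finset (Fin n)) ×ˢ (s \ {a, b})).sigma fun p =>
        tripleBlockMatchings fuel (s \ {a, b, p.2})).image fun q => insert {q.1.1, q.1.2} q.2 := by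
    ext E
    simp only [mem_tripleBlockMatchings_succ hab ha hb hsizes, mem_image, mem_sigma, mem_product,
      Sigma.exists, Prod.exists]
    grind
  rw [himage, card_image_of_injOn, card_sigma]
  rintro ⟨⟨x, c⟩, E₁⟩ h₁ ⟨⟨x', c'⟩, E₂⟩ h₂ h
  simp only [coe_sigma, Set.mem_sigma_iff, coe_product, Set.mem_prod, mem_coe] at h₁ h₂
  obtain ⟨rfl, rfl, rfl⟩ := insert_pair_inj h₁.1.1 h₂.1.1 (mem_sdiff.1 h₁.1.2).2
    (mem_sdiff.1 h₂.1.2).2 (hdisj h₁.2) (hdisj h₂.2) h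
  rfl

lemma card_tripleBlockMatchings {k fuel : ℕ} (hs : s.card = 3 * k) (hk : k ≤ fuel) :
    (tripleBlockMatchings fuel s).card = ∏ j ∈ range k, 2 * (3 * j + 1) := by
  induction k generalizing fuel s with
  | zero => rw [card_eq_zero.1 hs, tripleBlockMatchings_empty, card_singleton, prod_range_zero]
  | succ k ih =>
    obtain ⟨fuel, rfl⟩ : ∃ f, fuel = f + 1 := ⟨fuel - 1, by omega⟩
    obtain ⟨a, ha, b, hb, hab, hsizes⟩ := exists_blockSizes_succ (s := s) (by omega)
    have hcard : (s \ {a, b}).card = 3 * k + 1 := by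
      rw [card_sdiff_of_subset (by simp [insert_subset_iff, ha, hb]), card_pair hab]
      omega
    rw [card_tripleBlockMatchings_succ hab ha hb (hsizes · fuel), sum_congr rfl fun p hp =>
      ih (by have := card_sdiff_triple hab ha hb (mem_product.1 hp).2; omega) (by omega),
      sum_const, card_product, card_pair hab, hcard, prod_range_succ, smul_eq_mul]
    ring

lemma prod_range_eq_pow_mul_prod_Icc (k : ℕ) :
    ∏ j ∈ range k, 2 * (3 * j + 1) = 2 ^ k * ∏ j ∈ Icc 1 k, (3 * k - 3 * j + 1) := by
  rw [prod_mul_distrib, prod_const, card_range]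
  congr 1
  refine prod_nbij' (fun j => k - j) (fun j => k - j) ?_ ?_ ?_ ?_ ?_ <;> intro j hj <;>
    simp only [mem_range, mem_Icc] at hj ⊢ <;> omega

theorem count_all_blocks_of_size_three (n : ℕ) (h3 : n % 3 = 0) :
    ((Finset.univ : Finset (Finset (Finset (Fin n)))).filter fun E =>
        (∀ e ∈ E, e.card = 2) ∧
        (∀ e ∈ E, ∀ f ∈ E, e ≠ f → Disjoint e f) ∧
        (((blocks E n Finset.univ).map fun b => b.1.card : List ℕ) : Multiset ℕ) =
          Multiset.replicate (n / 3) 3).card =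
      2 ^ (n / 3) * ∏ j ∈ Finset.Icc 1 (n / 3), (n - 3 * j + 1) := by
  have hn : (univ : Finset (Fin n)).card = 3 * (n / 3) := by
    rw [card_univ, Fintype.card_fin]; omega
  calc _ = (tripleBlockMatchings n (univ : Finset (Fin n))).card := by
        congr 1
        ext E
        simp only [mem_filter, mem_univ, true_and, mem_tripleBlockMatchings, card_univ,
          Fintype.card_fin, ← Multiset.coe_replicate, Multiset.coe_eq_coe, List.perm_replicate,
          blockSizes]
        exact ⟨fun ⟨h2, hd, hb⟩ => ⟨⟨h2, hd, fun e _ => subset_univ e⟩, hb⟩,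
          fun ⟨hE, hb⟩ => ⟨hE.card_eq_two, hE.pairwise_disjoint, hb⟩⟩
    _ = ∏ j ∈ range (n / 3), 2 * (3 * j + 1) := card_tripleBlockMatchings hn (Nat.div_le_self n 3)
    _ = _ := by
        rw [prod_range_eq_pow_mul_prod_Icc]
        congr 2 with j
        omega
end
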